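/- Let p, q ∈ ℝ² with x_q ≤ x_p. Then for every y ∈ ℝ, δ_{pq}(y) = δ'_{pq}(y). -/

import Mathlib

open Metric Set

noncomputable section

/-- Points of the Euclidean plane ℝ². -/
abbrev Pt : Type := EuclideanSpace ℝ (Fin 2)

/-- The point (x, y) ∈ ℝ². -/
def pt (x y : ℝ) : Pt := (WithLp.equiv 2 (Fin 2 → ℝ)).symm ![x, y]

/-- The leftward horizontal halfline ←p = {(x, y_p) : x ≤ x_p}. -/
def leftRay (p : Pt) : Set Pt := {z : Pt | z 1 = p 1 ∧ z 0 ≤ p 0}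

/-- The rightward horizontal halfline →p = {(x, y_p) : x ≥ x_p}. -/
def rightRay (p : Pt) : Set Pt := {z : Pt | z 1 = p 1 ∧ p 0 ≤ z 0}

/-- h_{←p}(q): Euclidean distance from q to the leftward halfline at p. -/
def hL (p q : Pt) : ℝ := infDist q (leftRay p)

/-- h_{→p}(q): Euclidean distance from q to the rightward halfline at p. -/
def hR (p q : Pt) : ℝ := infDist q (rightRay p)

/-- h_{←S}(q) = max_{p ∈ S} h_{←p}(q). -/
def hLS (S : Finset Pt) (hS : S.Nonempty) (q : Pt) : ℝ := S.sup' hS fun p => hL p q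

/-- h_{→S}(q) = max_{p ∈ S} h_{→p}(q). -/
def hRS (S : Finset Pt) (hS : S.Nonempty) (q : Pt) : ℝ := S.sup' hS fun p => hR p q

/-- δ_{pq}(y) = inf_x max{‖(x,y) − p‖, ‖(x,y) − q‖}. -/
def delta (p q : Pt) (y : ℝ) : ℝ := ⨅ x : ℝ, max ‖pt x y - p‖ ‖pt x y - q‖

/-- δ'_{pq}(y) = inf_x max{h_{←q}((x,y)), h_{→p}((x,y))}. -/
def delta' (p q : Pt) (y : ℝ) : ℝ := ⨅ x : ℝ, max (hL q (pt x y)) (hR p (pt x y))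


/-! The ray distances `h_{←q}(x, y)` and `h_{→p}(x, y)` are the distances from `(x, y)` to the
points `(min x x_q, y_q)` and `(max x x_p, y_p)`. Hence `δ' ≤ δ`, since `q ∈ ←q` and `p ∈ →p`;
conversely, when `x_q ≤ x_p`, moving `x` to its clamp `c` in `[x_q, x_p]` gives
`‖(c, y) - q‖ ≤ h_{←q}(x, y)` and `‖(c, y) - p‖ ≤ h_{→p}(x, y)`, so `δ ≤ δ'`. -/

lemma Metric.infDist_eq_dist_of_forall_dist_le {α : Type*} [PseudoMetricSpace α] {s : Set α}
    {x z : α} (hz : z ∈ s) (h : ∀ w ∈ s, dist x z ≤ dist x w) : infDist x s = dist x z :=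
  le_antisymm (infDist_le_dist_of_mem hz) ((le_infDist ⟨z, hz⟩).2 h)

@[simp] lemma pt_apply_zero (x y : ℝ) : pt x y 0 = x := rfl

@[simp] lemma pt_apply_one (x y : ℝ) : pt x y 1 = y := rfl

lemma pt_eta (z : Pt) : pt (z 0) (z 1) = z := by
  ext i; fin_cases i <;> rfl

lemma dist_pt_pt (a b c d : ℝ) : dist (pt a b) (pt c d) = √((a - c) ^ 2 + (b - d) ^ 2) := by
  simp [EuclideanSpace.dist_eq, Fin.sum_univ_two, Real.dist_eq, sq_abs]

lemma dist_pt_pt_le_of_abs_le {a b c a' c' d : ℝ} (h : |a - c| ≤ |a' - c'|) :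
    dist (pt a b) (pt c d) ≤ dist (pt a' b) (pt c' d) := by
  rw [dist_pt_pt, dist_pt_pt]
  exact Real.sqrt_le_sqrt (by linarith [sq_le_sq.2 h])

lemma hL_pt (q : Pt) (x y : ℝ) : hL q (pt x y) = dist (pt x y) (pt (min x (q 0)) (q 1)) := by
  refine infDist_eq_dist_of_forall_dist_le ⟨rfl, min_le_right _ _⟩ fun w ⟨hw1, hw0⟩ ↦ ?_
  rw [← pt_eta w, hw1]
  refine dist_pt_pt_le_of_abs_le ?_
  rcases le_total x (q 0) with hx | hx
  · simp [min_eq_left hx]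
  · rw [min_eq_right hx, abs_of_nonneg (by linarith), abs_of_nonneg (by linarith)]
    linarith

lemma hR_pt (p : Pt) (x y : ℝ) : hR p (pt x y) = dist (pt x y) (pt (max x (p 0)) (p 1)) := by
  refine infDist_eq_dist_of_forall_dist_le ⟨rfl, le_max_right _ _⟩ fun w ⟨hw1, hw0⟩ ↦ ?_
  rw [← pt_eta w, hw1]
  refine dist_pt_pt_le_of_abs_le ?_
  rcases le_total x (p 0) with hx | hx
  · rw [max_eq_right hx, abs_of_nonpos (by linarith), abs_of_nonpos (by linarith)]
    linarith
  · simp [max_eq_left hx]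

lemma abs_clamp_sub_left_le {a b : ℝ} (hab : a ≤ b) (x : ℝ) :
    |max a (min x b) - a| ≤ |x - min x a| := by
  rcases le_total x a with hxa | hxa
  · simp [min_eq_left (hxa.trans hab), max_eq_left hxa]
  · rw [min_eq_right hxa, abs_of_nonneg (by simp [hxa, hab]), abs_of_nonneg (by linarith)]
    linarith [min_le_left x b, max_eq_right (le_min hxa hab)]

lemma abs_clamp_sub_right_le {a b : ℝ} (hab : a ≤ b) (x : ℝ) :
    |max a (min x b) - b| ≤ |x - max x b| := by
  rcases le_total x b with hxb | hxb
  · rw [max_eq_right hxb, abs_of_nonpos (by simp [hab]), abs_of_nonpos (by linarith)]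
    linarith [le_max_right a (min x b), min_eq_left hxb]
  · simp [min_eq_right hxb, max_eq_right hab, max_eq_left hxb]

theorem stmt_6 (p q : Pt) (h : q 0 ≤ p 0) (y : ℝ) : delta p q y = delta' p q y := by
  have hbdd : BddBelow (range fun x ↦ max ‖pt x y - p‖ ‖pt x y - q‖) :=
    ⟨0, by rintro _ ⟨x, rfl⟩; positivity⟩
  have hbdd' : BddBelow (range fun x ↦ max (hL q (pt x y)) (hR p (pt x y))) :=
    ⟨0, by rintro _ ⟨x, rfl⟩; exact le_max_of_le_left infDist_nonneg⟩
  apply le_antisymm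
  · refine le_ciInf fun x ↦ (ciInf_le hbdd (max (q 0) (min x (p 0)))).trans ?_
    rw [← dist_eq_norm, ← dist_eq_norm, max_comm, hL_pt, hR_pt, ← pt_eta p, ← pt_eta q]
    simp only [pt_apply_zero, pt_apply_one]
    exact max_le_max (dist_pt_pt_le_of_abs_le (abs_clamp_sub_left_le h x))
      (dist_pt_pt_le_of_abs_le (abs_clamp_sub_right_le h x))
  · refine ciInf_mono hbdd' fun x ↦ ?_
    rw [← dist_eq_norm, ← dist_eq_norm, max_comm]
    exact max_le_max (infDist_le_dist_of_mem ⟨rfl, le_rfl⟩) (infDist_le_dist_of_mem ⟨rfl, le_rfl⟩)
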